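/- For every rooted tree G, the tree searching strategy s_G guarantees an expected payoff of at least V_G against every Hider pure strategy: for every vertex v of G, the expected payoff E_{σ∼s_G}[P(v,σ)] ≥ V_G. -/

import Mathlib

/-!
Induction on the tree. Every search in the support of `s_G` starts at the root, so a Hider at
the root is found with probability `p_O ≥ V_G`. A Hider in the branch `G₁` of a two-branch root is
found by the search of `G₁` that `s_{G₁}` prescribes, preceded by the root and, when `G₂` goes
first, by all of `G₂`; so the payoff is `p_O (q_{G₁} + q_{G₂} π(G₂))` times the payoff of `s_{G₁}`
in `G₁`. That coefficient is identically `V_G / V_{G₁}`, so the induction hypothesis for `G₁`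
bounds the payoff below by `V_G`. At the root, `p_O ≥ V_G` amounts to `λ (1 - π(G₁)π(G₂)) ≤ 1`,
a consequence of `V ≤ 1`.
-/

/-- A rooted tree with vertex probabilities: a single vertex, a root with one branch,
or a root with two branches. -/
inductive RTree : Type
  | leaf (p : ℝ) : RTree
  | node1 (p : ℝ) (G' : RTree) : RTree
  | node2 (p : ℝ) (G₁ G₂ : RTree) : RTree

namespace RTree

/-- Validity of the probabilities: every leaf has probability in `(0,1)`, and every
internal vertex (including the root) has probability in `(0,1]`. -/
def valid : RTree → Prop
  | leaf p => 0 < p ∧ p < 1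
  | node1 p G' => (0 < p ∧ p ≤ 1) ∧ valid G'
  | node2 p G₁ G₂ => (0 < p ∧ p ≤ 1) ∧ valid G₁ ∧ valid G₂

/-- `π(G)`, the product of the probabilities of all vertices of `G`. -/
def piT : RTree → ℝ
  | leaf p => p
  | node1 p G' => p * piT G'
  | node2 p G₁ G₂ => p * (piT G₁ * piT G₂)

/-- The recursively defined value `V_G` of the game on `G`. -/
noncomputable def valT : RTree → ℝ
  | leaf p => p
  | node1 p G' => p * valT G'
  | node2 p G₁ G₂ =>
      p * (((1 - piT G₁) / valT G₁ + (1 - piT G₂) / valT G₂)⁻¹) * (1 - piT G₁ * piT G₂)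

/-- The normalizing factor `λ` for a branch vertex with branches `G₁` and `G₂`. -/
noncomputable def lamT (G₁ G₂ : RTree) : ℝ :=
  ((1 - piT G₁) / valT G₁ + (1 - piT G₂) / valT G₂)⁻¹


/-- Vertices of a rooted tree, as addresses: the root is `[]`, and the address of a
vertex in a branch is the branch direction (`false` for the first/unique branch,
`true` for the second) followed by its address within the branch. -/
def verts : RTree → List (List Bool)
  | leaf _ => [[]]
  | node1 _ G' => [] :: (verts G').map (List.cons false)
  | node2 _ G₁ G₂ => [] :: ((verts G₁).map (List.cons false) ++ (verts G₂).map (List.cons true))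

/-- The success probability of the vertex at a given address. -/
def pAt : RTree → List Bool → ℝ
  | leaf p, _ => p
  | node1 p _, [] => p
  | node1 _ G', _ :: l => pAt G' l
  | node2 p _ _, [] => p
  | node2 _ G₁ _, false :: l => pAt G₁ l
  | node2 _ _ G₂, true :: l => pAt G₂ l

/-- The subtree `G(v)` rooted at the vertex with address `v` (if it exists). -/
def sub? : RTree → List Bool → Option RTree
  | t, [] => some t
  | leaf _, _ :: _ => none
  | node1 _ G', false :: l => sub? G' l
  | node1 _ _, true :: _ => none
  | node2 _ G₁ _, false :: l => sub? G₁ l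
  | node2 _ _ G₂, true :: l => sub? G₂ l

/-- The tree hiding strategy `h_G`, as a function assigning probabilities to addresses. -/
noncomputable def hide : RTree → List Bool → ℝ
  | leaf _, [] => 1
  | leaf _, _ :: _ => 0
  | node1 _ _, [] => 0
  | node1 _ G', false :: l => hide G' l
  | node1 _ _, true :: _ => 0
  | node2 _ _ _, [] => 0
  | node2 _ G₁ G₂, false :: l => lamT G₁ G₂ * ((1 - piT G₁) / valT G₁) * hide G₁ l
  | node2 _ G₁ G₂, true :: l => lamT G₁ G₂ * ((1 - piT G₂) / valT G₂) * hide G₂ l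

/-- An expanding search of `G`: an ordering of all of the vertices of `G` in which every
vertex other than the root appears after its parent (hence the root `[]` comes first). -/
def IsSearch (G : RTree) (σ : List (List Bool)) : Prop :=
  σ.Perm (verts G) ∧ ∀ a ∈ σ, a ≠ [] → σ.idxOf a.dropLast < σ.idxOf a

/-- A depth-first expanding search: for every vertex `v`, the vertices of the subtree
`G(v)` occupy consecutive positions beginning with `v`;  equivalently, any vertex `w`
appearing between `v` and a descendant of `v` is itself a descendant of `v`. -/
def IsDFS (G : RTree) (σ : List (List Bool)) : Prop :=
  IsSearch G σ ∧ ∀ v a w, v ∈ σ → a ∈ σ → w ∈ σ → v <+: a →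
    σ.idxOf v ≤ σ.idxOf w → σ.idxOf w ≤ σ.idxOf a → v <+: w

/-- `P(v,σ)`: the probability of reaching and successfully searching vertex `v`,
i.e. the product of `p` over the locations searched up to and including `v`. -/
def capProb (G : RTree) (σ : List (List Bool)) (v : List Bool) : ℝ :=
  ((σ.take (σ.idxOf v + 1)).map (pAt G)).prod

/-- `P(x,σ) = Σ_v x(v) P(v,σ)` for a distribution `x` on the vertices. -/
def payoffD (G : RTree) (x : List Bool → ℝ) (σ : List (List Bool)) : ℝ :=
  (σ.map (fun v => x v * capProb G σ v)).sum

end RTree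

namespace RTree

/-- The tree searching strategy `s_G`, given as a finite list of (depth-first expanding
search, probability) pairs: at each branch vertex with branches `G₁` and `G₂`, the
branch `G₁` is searched first with probability `λ(1/V_{G₁} − π(G₂)/V_{G₂})`, and
otherwise `G₂` is searched first, independently at each branch vertex. -/
noncomputable def sG : RTree → List (List (List Bool) × ℝ)
  | leaf _ => [([([] : List Bool)], 1)]
  | node1 _ G' =>
      (sG G').map (fun sq => (([] : List Bool) :: sq.1.map (List.cons false), sq.2))
  | node2 _ G₁ G₂ =>
      let r₁ := sG G₁
      let r₂ := sG G₂
      let q₁ := lamT G₁ G₂ * (1 / valT G₁ - piT G₂ / valT G₂)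
      let q₂ := lamT G₁ G₂ * (1 / valT G₂ - piT G₁ / valT G₁)
      r₁.flatMap (fun s₁ =>
        r₂.flatMap (fun s₂ =>
          [(([] : List Bool) :: (s₁.1.map (List.cons false) ++ s₂.1.map (List.cons true)),
              q₁ * s₁.2 * s₂.2),
           (([] : List Bool) :: (s₂.1.map (List.cons true) ++ s₁.1.map (List.cons false)),
              q₂ * s₁.2 * s₂.2)]))

/-- The expected payoff of the tree searching strategy `s_G` against a Hider hiding at
vertex `v`. -/
noncomputable def sGPay (G : RTree) (v : List Bool) : ℝ :=
  ((sG G).map (fun sq => sq.2 * capProb G sq.1 v)).sum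

end RTree

theorem le_div_mul_of_le {a b c : ℝ} (ha : 0 ≤ a) (hb : 0 < b) (h : b ≤ c) : a ≤ a / b * c := by
  rw [div_mul_eq_mul_div, le_div_iff₀ hb]
  exact mul_le_mul_of_nonneg_left h ha

namespace List

variable {α β γ : Type*}

def takeThrough [BEq α] (l : List α) (a : α) : List α := l.take (l.idxOf a + 1)

section TakeThrough

variable [BEq α] [LawfulBEq α]

theorem takeThrough_cons_of_ne {a b : α} (l : List α) (h : b ≠ a) :
    (b :: l).takeThrough a = b :: l.takeThrough a := by
  simp [takeThrough, idxOf_cons_ne l h]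

theorem takeThrough_append_of_mem {a : α} {l₁ : List α} (l₂ : List α) (h : a ∈ l₁) :
    (l₁ ++ l₂).takeThrough a = l₁.takeThrough a := by
  rw [takeThrough, idxOf_append_of_mem h, take_append_of_le_length (idxOf_lt_length_of_mem h)]
  rfl

theorem takeThrough_append_of_notMem {a : α} {l₁ : List α} (l₂ : List α) (h : a ∉ l₁) :
    (l₁ ++ l₂).takeThrough a = l₁ ++ l₂.takeThrough a := by
  rw [takeThrough, idxOf_append_of_notMem h, Nat.add_assoc, take_length_add_append]
  rfl

theorem takeThrough_map [BEq β] [LawfulBEq β] {f : α → β} (hf : Function.Injective f)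
    (l : List α) (a : α) : (l.map f).takeThrough (f a) = (l.takeThrough a).map f := by
  induction l with
  | nil => rfl
  | cons b l ih =>
    by_cases hb : b = a
    · subst hb
      simp [takeThrough]
    · rw [map_cons, takeThrough_cons_of_ne _ (hf.ne hb), ih, takeThrough_cons_of_ne _ hb, map_cons]

end TakeThrough

def weightedSum (l : List (α × ℝ)) (f : α → ℝ) : ℝ := (l.map fun x => x.2 * f x.1).sum

theorem weightedSum_congr {l : List (α × ℝ)} {f g : α → ℝ} (h : ∀ x ∈ l, f x.1 = g x.1) :
    l.weightedSum f = l.weightedSum g := by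
  unfold weightedSum
  rw [map_congr_left fun x hx => by rw [h x hx]]

theorem weightedSum_mul_left (l : List (α × ℝ)) (c : ℝ) (f : α → ℝ) :
    l.weightedSum (fun a => c * f a) = c * l.weightedSum f := by
  unfold weightedSum
  rw [← sum_map_mul_left]
  congr 1
  exact map_congr_left fun _ _ => by ring

theorem weightedSum_const (l : List (α × ℝ)) (c : ℝ) :
    l.weightedSum (fun _ => c) = c * l.weightedSum (fun _ => 1) := by
  simpa using weightedSum_mul_left l c (fun _ => 1)

theorem weightedSum_map_fst (l : List (α × ℝ)) (g : α → β) (f : β → ℝ) :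
    (l.map fun x => (g x.1, x.2)).weightedSum f = l.weightedSum (f ∘ g) := by
  simp [weightedSum, Function.comp_def]

theorem weightedSum_flatMap_mixture (l₁ : List (α × ℝ)) (l₂ : List (β × ℝ)) (A B : α → β → γ)
    (q₁ q₂ : ℝ) (f : γ → ℝ) :
    (l₁.flatMap fun x => l₂.flatMap fun y =>
        [(A x.1 y.1, q₁ * x.2 * y.2), (B x.1 y.1, q₂ * x.2 * y.2)]).weightedSum f =
      l₁.weightedSum fun a => l₂.weightedSum fun b => q₁ * f (A a b) + q₂ * f (B a b) := by
  simp only [weightedSum, flatMap_def, map_flatten, sum_flatten, map_map, Function.comp_def,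
    map_cons, map_nil, sum_cons, sum_nil, ← sum_map_mul_left]
  congr 1
  refine map_congr_left fun x _ => ?_
  congr 1
  exact map_congr_left fun y _ => by ring

end List

namespace RTree

open List

theorem piT_pos {G : RTree} (hG : G.valid) : 0 < G.piT := by
  induction G with
  | leaf p => exact hG.1
  | node1 p G' ih => exact mul_pos hG.1.1 (ih hG.2)
  | node2 p G₁ G₂ ih₁ ih₂ => exact mul_pos hG.1.1 (mul_pos (ih₁ hG.2.1) (ih₂ hG.2.2))

theorem piT_lt_one {G : RTree} (hG : G.valid) : G.piT < 1 := by
  induction G with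
  | leaf p => exact hG.2
  | node1 p G' ih => exact mul_lt_one_of_nonneg_of_lt_one_right hG.1.2 (piT_pos hG.2).le (ih hG.2)
  | node2 p G₁ G₂ ih₁ ih₂ =>
    have hπ := mul_lt_one_of_nonneg_of_lt_one_left (piT_pos hG.2.1).le (ih₁ hG.2.1) (ih₂ hG.2.2).le
    exact mul_lt_one_of_nonneg_of_lt_one_right hG.1.2
      (mul_pos (piT_pos hG.2.1) (piT_pos hG.2.2)).le hπ

theorem one_sub_piT_mul_piT_pos {G₁ G₂ : RTree} (h₁ : G₁.valid) (h₂ : G₂.valid) :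
    0 < 1 - G₁.piT * G₂.piT := by
  nlinarith [piT_pos h₁, piT_lt_one h₁, piT_pos h₂, piT_lt_one h₂]

theorem lamT_pos {G₁ G₂ : RTree} (hπ₁ : G₁.piT < 1) (hπ₂ : G₂.piT < 1) (hV₁ : 0 < G₁.valT)
    (hV₂ : 0 < G₂.valT) : 0 < lamT G₁ G₂ :=
  inv_pos.2 (add_pos (div_pos (sub_pos.2 hπ₁) hV₁) (div_pos (sub_pos.2 hπ₂) hV₂))

theorem valT_node2 (p : ℝ) (G₁ G₂ : RTree) :
    (node2 p G₁ G₂).valT = p * lamT G₁ G₂ * (1 - G₁.piT * G₂.piT) :=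
  rfl

theorem valT_pos {G : RTree} (hG : G.valid) : 0 < G.valT := by
  induction G with
  | leaf p => exact hG.1
  | node1 p G' ih => exact mul_pos hG.1.1 (ih hG.2)
  | node2 p G₁ G₂ ih₁ ih₂ =>
    have hlam := lamT_pos (piT_lt_one hG.2.1) (piT_lt_one hG.2.2) (ih₁ hG.2.1) (ih₂ hG.2.2)
    exact mul_pos (mul_pos hG.1.1 hlam) (one_sub_piT_mul_piT_pos hG.2.1 hG.2.2)

theorem lamT_mul_le_one {G₁ G₂ : RTree} (h₁ : G₁.valid) (h₂ : G₂.valid) (hV₁ : G₁.valT ≤ 1)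
    (hV₂ : G₂.valT ≤ 1) : lamT G₁ G₂ * (1 - G₁.piT * G₂.piT) ≤ 1 := by
  have hπ₁ := piT_lt_one h₁
  have hπ₂ := piT_lt_one h₂
  have hD : 0 < (1 - G₁.piT) / G₁.valT + (1 - G₂.piT) / G₂.valT :=
    inv_pos.1 (lamT_pos hπ₁ hπ₂ (valT_pos h₁) (valT_pos h₂))
  have hA : 1 - G₁.piT ≤ (1 - G₁.piT) / G₁.valT :=
    le_div_self (sub_pos.2 hπ₁).le (valT_pos h₁) hV₁
  have hB : 1 - G₂.piT ≤ (1 - G₂.piT) / G₂.valT :=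
    le_div_self (sub_pos.2 hπ₂).le (valT_pos h₂) hV₂
  rw [lamT, inv_mul_le_iff₀ hD, mul_one]
  -- `1 - π₁π₂ ≤ (1 - π₁) + (1 - π₂)` is `0 ≤ (1 - π₁)(1 - π₂)`
  nlinarith [mul_pos (sub_pos.2 hπ₁) (sub_pos.2 hπ₂)]

theorem valT_le_one {G : RTree} (hG : G.valid) : G.valT ≤ 1 := by
  induction G with
  | leaf p => exact hG.2.le
  | node1 p G' ih => exact mul_le_one₀ hG.1.2 (valT_pos hG.2).le (ih hG.2)
  | node2 p G₁ G₂ ih₁ ih₂ =>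
    rw [valT_node2, mul_assoc]
    exact mul_le_one₀ hG.1.2
      (mul_pos (lamT_pos (piT_lt_one hG.2.1) (piT_lt_one hG.2.2) (valT_pos hG.2.1)
        (valT_pos hG.2.2)) (one_sub_piT_mul_piT_pos hG.2.1 hG.2.2)).le
      (lamT_mul_le_one hG.2.1 hG.2.2 (ih₁ hG.2.1) (ih₂ hG.2.2))

theorem valT_le_pAt_nil {G : RTree} (hG : G.valid) : G.valT ≤ G.pAt [] := by
  cases G with
  | leaf p => exact le_rfl
  | node1 p G' => exact mul_le_of_le_one_right hG.1.1.le (valT_le_one hG.2)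
  | node2 p G₁ G₂ =>
    rw [valT_node2, mul_assoc]
    exact mul_le_of_le_one_right hG.1.1.le
      (lamT_mul_le_one hG.2.1 hG.2.2 (valT_le_one hG.2.1) (valT_le_one hG.2.2))

theorem prod_map_pAt_verts (G : RTree) : ((verts G).map (pAt G)).prod = G.piT := by
  induction G with
  | leaf p => simp [verts, pAt, piT]
  | node1 p G' ih =>
    simp only [verts, map_cons, map_map, prod_cons, piT]
    exact congrArg _ ih
  | node2 p G₁ G₂ ih₁ ih₂ =>
    simp only [verts, map_cons, map_append, map_map, prod_cons, prod_append, piT]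
    exact congrArg _ (congrArg₂ _ ih₁ ih₂)

theorem prod_map_pAt_of_perm {G : RTree} {σ : List (List Bool)} (hσ : σ.Perm (verts G)) :
    (σ.map (pAt G)).prod = G.piT :=
  (hσ.map _).prod_eq.trans (prod_map_pAt_verts G)

theorem weightedSum_sG_node2 (p : ℝ) (G₁ G₂ : RTree) (f : List (List Bool) → ℝ) :
    (sG (node2 p G₁ G₂)).weightedSum f =
      (sG G₁).weightedSum fun σ₁ => (sG G₂).weightedSum fun σ₂ =>
        lamT G₁ G₂ * (1 / G₁.valT - G₂.piT / G₂.valT) *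
            f ([] :: (σ₁.map (cons false) ++ σ₂.map (cons true))) +
          lamT G₁ G₂ * (1 / G₂.valT - G₁.piT / G₁.valT) *
            f ([] :: (σ₂.map (cons true) ++ σ₁.map (cons false))) := by
  simp only [sG]
  exact weightedSum_flatMap_mixture _ _
    (fun (σ₁ σ₂ : List (List Bool)) => [] :: (σ₁.map (cons false) ++ σ₂.map (cons true)))
    (fun σ₁ σ₂ => [] :: (σ₂.map (cons true) ++ σ₁.map (cons false))) _ _ f

theorem mem_sG_node2 {p : ℝ} {G₁ G₂ : RTree} {s : List (List Bool) × ℝ}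
    (hs : s ∈ sG (node2 p G₁ G₂)) :
    ∃ s₁ ∈ sG G₁, ∃ s₂ ∈ sG G₂,
      s.1 = [] :: (s₁.1.map (cons false) ++ s₂.1.map (cons true)) ∨
        s.1 = [] :: (s₂.1.map (cons true) ++ s₁.1.map (cons false)) := by
  simp only [sG, mem_flatMap, mem_cons, not_mem_nil, or_false] at hs
  obtain ⟨s₁, hs₁, s₂, hs₂, rfl | rfl⟩ := hs
  · exact ⟨s₁, hs₁, s₂, hs₂, .inl rfl⟩
  · exact ⟨s₁, hs₁, s₂, hs₂, .inr rfl⟩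

theorem perm_verts_of_mem_sG {G : RTree} {s : List (List Bool) × ℝ} (hs : s ∈ sG G) :
    s.1.Perm (verts G) := by
  induction G generalizing s with
  | leaf p => simp_all [sG, verts]
  | node1 p G' ih =>
    obtain ⟨s', hs', rfl⟩ := mem_map.1 hs
    exact ((ih hs').map _).cons _
  | node2 p G₁ G₂ ih₁ ih₂ =>
    obtain ⟨s₁, hs₁, s₂, hs₂, h | h⟩ := mem_sG_node2 hs <;> rw [h]
    · exact (((ih₁ hs₁).map _).append ((ih₂ hs₂).map _)).cons _
    · exact (perm_append_comm.trans (((ih₁ hs₁).map _).append ((ih₂ hs₂).map _))).cons _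

theorem exists_eq_nil_cons_of_mem_sG {G : RTree} {s : List (List Bool) × ℝ} (hs : s ∈ sG G) :
    ∃ τ, s.1 = [] :: τ := by
  cases G with
  | leaf p => simp_all [sG]
  | node1 p G' =>
    obtain ⟨s', -, rfl⟩ := mem_map.1 hs
    exact ⟨_, rfl⟩
  | node2 p G₁ G₂ =>
    obtain ⟨_, _, _, _, h | h⟩ := mem_sG_node2 hs <;> exact ⟨_, h⟩

theorem sG_weightedSum_one {G : RTree} (hG : G.valid) : (sG G).weightedSum (fun _ => 1) = 1 := by
  induction G with
  | leaf p => simp [sG, weightedSum]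
  | node1 p G' ih =>
    exact (weightedSum_map_fst (sG G') (fun σ => [] :: σ.map (cons false)) _).trans (ih hG.2)
  | node2 p G₁ G₂ ih₁ ih₂ =>
    have hlam := lamT_pos (piT_lt_one hG.2.1) (piT_lt_one hG.2.2) (valT_pos hG.2.1)
      (valT_pos hG.2.2)
    have hq : lamT G₁ G₂ * (1 / G₁.valT - G₂.piT / G₂.valT) * 1 +
        lamT G₁ G₂ * (1 / G₂.valT - G₁.piT / G₁.valT) * 1 = 1 :=
      calc _ = lamT G₁ G₂ * ((1 - G₁.piT) / G₁.valT + (1 - G₂.piT) / G₂.valT) := by ring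
        _ = 1 := inv_mul_cancel₀ (inv_pos.1 hlam).ne'
    rw [weightedSum_sG_node2]
    simp only [hq, ih₂ hG.2.2]
    exact ih₁ hG.2.1

theorem capProb_eq (G : RTree) (σ : List (List Bool)) (v : List Bool) :
    capProb G σ v = ((σ.takeThrough v).map (pAt G)).prod :=
  rfl

theorem capProb_nil_cons_nil (G : RTree) (τ : List (List Bool)) :
    capProb G ([] :: τ) [] = G.pAt [] := by
  simp [capProb_eq, takeThrough]

theorem capProb_nil_cons_cons (G : RTree) (τ : List (List Bool)) (b : Bool) (l : List Bool) :
    capProb G ([] :: τ) (b :: l) = G.pAt [] * ((τ.takeThrough (b :: l)).map (pAt G)).prod := by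
  rw [capProb_eq, takeThrough_cons_of_ne _ (cons_ne_nil b l).symm, map_cons, prod_cons]

theorem capProb_branch_first {G H : RTree} {b : Bool} (hb : pAt G ∘ cons b = pAt H)
    {σ : List (List Bool)} {l : List Bool} (hl : l ∈ σ) (τ : List (List Bool)) :
    capProb G ([] :: (σ.map (cons b) ++ τ)) (b :: l) = G.pAt [] * capProb H σ l := by
  rw [capProb_nil_cons_cons, takeThrough_append_of_mem _ (mem_map_of_mem hl),
    takeThrough_map cons_injective σ l, map_map, hb, capProb_eq]

theorem capProb_branch_second {G H : RTree} {b : Bool} (hb : pAt G ∘ cons b = pAt H)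
    {τ : List (List Bool)} {l : List Bool} (hτ : b :: l ∉ τ) (σ : List (List Bool)) :
    capProb G ([] :: (τ ++ σ.map (cons b))) (b :: l) =
      G.pAt [] * ((τ.map (pAt G)).prod * capProb H σ l) := by
  rw [capProb_nil_cons_cons, takeThrough_append_of_notMem _ hτ, map_append, prod_append,
    takeThrough_map cons_injective σ l, map_map, hb, capProb_eq]

theorem sGPay_eq (G : RTree) (v : List Bool) :
    sGPay G v = (sG G).weightedSum (capProb G · v) :=
  rfl

theorem sGPay_nil {G : RTree} (hG : G.valid) : sGPay G [] = G.pAt [] := by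
  have hroot : ∀ s ∈ sG G, capProb G s.1 [] = G.pAt [] := fun s hs => by
    obtain ⟨τ, hτ⟩ := exists_eq_nil_cons_of_mem_sG hs
    rw [hτ, capProb_nil_cons_nil]
  rw [sGPay_eq, weightedSum_congr (g := fun _ => G.pAt []) hroot, weightedSum_const,
    sG_weightedSum_one hG, mul_one]

theorem valT_le_sGPay_nil {G : RTree} (hG : G.valid) : G.valT ≤ sGPay G [] :=
  (sGPay_nil hG).symm ▸ valT_le_pAt_nil hG

theorem sGPay_node1_false (p : ℝ) {G' : RTree} {l : List Bool} (hl : l ∈ verts G') :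
    sGPay (node1 p G') (false :: l) = p * sGPay G' l := by
  rw [sGPay_eq, sG, weightedSum_map_fst _ (fun σ : List (List Bool) => [] :: σ.map (cons false)),
    sGPay_eq, ← weightedSum_mul_left]
  refine weightedSum_congr fun s hs => ?_
  simpa [pAt] using capProb_branch_first (G := node1 p G') rfl
    ((perm_verts_of_mem_sG hs).mem_iff.2 hl) []

theorem sGPay_node2_false (p : ℝ) {G₁ G₂ : RTree} (h₂ : G₂.valid) {l : List Bool}
    (hl : l ∈ verts G₁) :
    sGPay (node2 p G₁ G₂) (false :: l) = (node2 p G₁ G₂).valT / G₁.valT * sGPay G₁ l := by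
  have hcoeff : p * (lamT G₁ G₂ * (1 / G₁.valT - G₂.piT / G₂.valT) +
      lamT G₁ G₂ * (1 / G₂.valT - G₁.piT / G₁.valT) * G₂.piT) =
      (node2 p G₁ G₂).valT / G₁.valT := by
    rw [valT_node2]; ring
  rw [sGPay_eq, weightedSum_sG_node2, sGPay_eq, ← weightedSum_mul_left, ← hcoeff]
  refine weightedSum_congr fun s₁ hs₁ => ?_
  have hl₁ : l ∈ s₁.1 := (perm_verts_of_mem_sG hs₁).mem_iff.2 hl
  rw [weightedSum_congr (g := fun _ => _) fun s₂ hs₂ => ?_, weightedSum_const,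
    sG_weightedSum_one h₂, mul_one]
  have hnot : false :: l ∉ s₂.1.map (cons true) := by simp
  rw [capProb_branch_first (G := node2 p G₁ G₂) rfl hl₁,
    capProb_branch_second (G := node2 p G₁ G₂) rfl hnot, map_map,
    show pAt (node2 p G₁ G₂) ∘ cons true = pAt G₂ from rfl,
    prod_map_pAt_of_perm (perm_verts_of_mem_sG hs₂), pAt]
  ring

theorem sGPay_node2_true (p : ℝ) {G₁ G₂ : RTree} (h₁ : G₁.valid) {l : List Bool}
    (hl : l ∈ verts G₂) :
    sGPay (node2 p G₁ G₂) (true :: l) = (node2 p G₁ G₂).valT / G₂.valT * sGPay G₂ l := by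
  have hcoeff : p * (lamT G₁ G₂ * (1 / G₁.valT - G₂.piT / G₂.valT) * G₁.piT +
      lamT G₁ G₂ * (1 / G₂.valT - G₁.piT / G₁.valT)) =
      (node2 p G₁ G₂).valT / G₂.valT := by
    rw [valT_node2]; ring
  rw [sGPay_eq, weightedSum_sG_node2, weightedSum_congr (g := fun _ => _) fun s₁ hs₁ => ?_,
    weightedSum_const, sG_weightedSum_one h₁, mul_one]
  rw [sGPay_eq, ← weightedSum_mul_left, ← hcoeff]
  refine weightedSum_congr fun s₂ hs₂ => ?_
  have hl₂ : l ∈ s₂.1 := (perm_verts_of_mem_sG hs₂).mem_iff.2 hl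
  have hnot : true :: l ∉ s₁.1.map (cons false) := by simp
  rw [capProb_branch_first (G := node2 p G₁ G₂) rfl hl₂,
    capProb_branch_second (G := node2 p G₁ G₂) rfl hnot, map_map,
    show pAt (node2 p G₁ G₂) ∘ cons false = pAt G₁ from rfl,
    prod_map_pAt_of_perm (perm_verts_of_mem_sG hs₁), pAt]
  ring

end RTree

open RTree in
/-- the tree searching strategy `s_G` guarantees an expected payoff of at
least `V_G` against every Hider pure strategy (hiding vertex) `v`. -/
theorem searching_strategy_guarantee (G : RTree) (hG : G.valid) :
    ∀ v ∈ verts G, G.valT ≤ sGPay G v := by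
  induction G with
  | leaf p =>
    simpa only [verts, List.forall_mem_singleton] using valT_le_sGPay_nil hG
  | node1 p G' ih =>
    simp only [verts, List.forall_mem_cons, List.forall_mem_map]
    refine ⟨valT_le_sGPay_nil hG, fun l hl => ?_⟩
    rw [sGPay_node1_false p hl]
    exact mul_le_mul_of_nonneg_left (ih hG.2 l hl) hG.1.1.le
  | node2 p G₁ G₂ ih₁ ih₂ =>
    simp only [verts, List.forall_mem_cons, List.forall_mem_append, List.forall_mem_map]
    refine ⟨valT_le_sGPay_nil hG, fun l hl => ?_, fun l hl => ?_⟩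
    · rw [sGPay_node2_false p hG.2.2 hl]
      exact le_div_mul_of_le (valT_pos hG).le (valT_pos hG.2.1) (ih₁ hG.2.1 l hl)
    · rw [sGPay_node2_true p hG.2.1 hl]
      exact le_div_mul_of_le (valT_pos hG).le (valT_pos hG.2.2) (ih₂ hG.2.2 l hl)
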